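/- arXiv:1711.08639 — 2 statements merged into one kernel-verified Lean document; each statement's English description precedes it below -/
import Mathlib

section
/- Let V be a 2-vector space, Γ an essentially finite groupoid, V ∈ V an object, and ξ_V : Γ → V the constant functor with value V. Then lim ξ_V exists and is canonically isomorphic to both the product ∏_{π₀(Γ)} V and the coproduct ∐_{π₀(Γ)} V, and the pushforward map t_* : lim ξ_V → V along the unique functor t : Γ → ⋆ acts on the summand indexed by [x] ∈ π₀(Γ) as (1/|Aut(x)|) · id_V. -/
open CategoryTheory CategoryTheory.Limits

universe v u

/-- Isomorphism classes of objects (π₀). -/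
abbrev Pi0 (C : Type*) [Category C] : Type _ := Quotient (CategoryTheory.isIsomorphicSetoid C)

/-- Isomorphism classes of simple objects. -/
abbrev SimpleClasses (V : Type u) [Category.{v} V] [Limits.HasZeroMorphisms V] : Type _ :=
  Pi0 (ObjectProperty.FullSubcategory (fun X : V => Simple X))

/-- A 2-vector space (of Kapranov–Voevodsky type): a ℂ-linear additive category with
finite biproducts which is semisimple with finitely many isomorphism classes of simple
objects. -/
class IsTwoVectorSpace (V : Type u) [Category.{v} V] [Preadditive V]
    [CategoryTheory.Linear ℂ V] [HasFiniteBiproducts V] : Prop where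
  semisimple : ∀ X : V, ∃ (n : ℕ) (f : Fin n → V) (_ : ∀ i, Simple (f i)), Nonempty (X ≅ ⨁ f)
  finiteSimples : Finite (SimpleClasses V)

/-- An essentially finite groupoid: finitely many isomorphism classes, finite hom-sets. -/
class EssentiallyFiniteGroupoid (C : Type*) [Category C] : Prop where
  finite_pi0 : Finite (Pi0 C)
  finite_hom : ∀ x y : C, Finite (x ⟶ y)

/- Proof idea: a cone over a constant functor on a groupoid has equal legs at isomorphic
objects, so it is exactly a family of maps indexed by `π₀(Γ)`, and `⨁_{π₀(Γ)} V₀` with its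
projections is a limit cone (finiteness of `π₀(Γ)` makes the biproduct exist). Composed with the
inclusion of the `c`-th summand, the weighted sum `Σ_d a_d • π_d` leaves only `a_c • 𝟙`. -/

namespace CategoryTheory.Limits

attribute [local instance] isIsomorphicSetoid

variable {C : Type u} [Category.{v} C]

lemma Cone.π_app_eq_of_hom_const {J : Type*} [Category J] {X : C}
    (s : Cone ((Functor.const J).obj X)) {x y : J} (f : x ⟶ y) : s.π.app x = s.π.app y := by
  simpa using s.w f

lemma Cone.π_app_out_mk_const {Γ : Type*} [Groupoid Γ] {X : C}
    (s : Cone ((Functor.const Γ).obj X)) (x : Γ) :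
    s.π.app (⟦x⟧ : Pi0 Γ).out = s.π.app x :=
  Cone.π_app_eq_of_hom_const s (Quotient.mk_out (s := isIsomorphicSetoid Γ) x).some.hom

lemma biproduct.ι_comp_sum_smul_π_const {R : Type*} [Semiring R] [Preadditive C] [Linear R C]
    {J : Type*} [Fintype J] {X : C} [HasBiproduct fun _ : J => X]
    (a : J → R) (c : J) :
    biproduct.ι (fun _ : J => X) c ≫ ∑ d, a d • biproduct.π (fun _ : J => X) d = a c • 𝟙 X := by
  classical
  simp only [Preadditive.comp_sum, Linear.comp_smul, biproduct.ι_π, smul_dite, smul_zero,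
    Finset.sum_dite_eq, Finset.mem_univ, if_true, eqToHom_refl]

variable [HasZeroMorphisms C] (Γ : Type*) [Groupoid Γ] (X : C) [HasBiproduct fun _ : Pi0 Γ => X]

noncomputable def constBiproductCone : Cone ((Functor.const Γ).obj X) where
  pt := ⨁ fun _ : Pi0 Γ => X
  π :=
    { app := fun x => biproduct.π (fun _ : Pi0 Γ => X) ⟦x⟧
      naturality := fun x y f => by
        have hxy : (⟦x⟧ : Pi0 Γ) = ⟦y⟧ := _root_.Quotient.sound ⟨(Groupoid.isoEquivHom x y).symm f⟩
        simp [hxy] }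

lemma constBiproductCone_π_app_out (d : Pi0 Γ) :
    (constBiproductCone Γ X).π.app d.out = biproduct.π (fun _ : Pi0 Γ => X) d := by
  simp only [constBiproductCone, Quotient.out_eq]

noncomputable def isLimitConstBiproductCone : IsLimit (constBiproductCone Γ X) where
  lift s := biproduct.lift fun d => s.π.app d.out
  fac s x := by
    simp only [constBiproductCone, biproduct.lift_π]
    exact Cone.π_app_out_mk_const s x
  uniq s m hm := biproduct.hom_ext _ _ fun d => by
    simpa [constBiproductCone, Quotient.out_eq] using hm d.out

variable [HasLimit ((Functor.const Γ).obj X)]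

noncomputable def limitConstIsoBiproduct :
    limit ((Functor.const Γ).obj X) ≅ ⨁ fun _ : Pi0 Γ => X :=
  limit.isoLimitCone ⟨_, isLimitConstBiproductCone Γ X⟩

lemma limitConstIsoBiproduct_hom_π (d : Pi0 Γ) :
    (limitConstIsoBiproduct Γ X).hom ≫ biproduct.π (fun _ : Pi0 Γ => X) d =
      limit.π ((Functor.const Γ).obj X) d.out := by
  rw [← constBiproductCone_π_app_out]
  exact limit.isoLimitCone_hom_π _ _

lemma limitConstIsoBiproduct_inv_π (d : Pi0 Γ) :
    (limitConstIsoBiproduct Γ X).inv ≫ limit.π ((Functor.const Γ).obj X) d.out =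
      biproduct.π (fun _ : Pi0 Γ => X) d := by
  rw [← constBiproductCone_π_app_out]
  exact limit.isoLimitCone_inv_π _ _

end CategoryTheory.Limits

open CategoryTheory.Limits in
theorem limit_constant_functor_essentially_finite_general
    {V : Type u} [Category.{v} V] [Preadditive V] [CategoryTheory.Linear ℂ V]
    [HasFiniteBiproducts V]
    {Γ : Type} [Groupoid Γ] [EssentiallyFiniteGroupoid Γ] (V₀ : V) :
    HasLimit ((Functor.const Γ).obj V₀) ∧
    (∀ [HasLimit ((Functor.const Γ).obj V₀)] [HasBiproduct (fun _ : Pi0 Γ => V₀)],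
      ∃ e : limit ((Functor.const Γ).obj V₀) ≅ ⨁ (fun _ : Pi0 Γ => V₀),
        (∀ c : Pi0 Γ,
          e.hom ≫ biproduct.π (fun _ : Pi0 Γ => V₀) c =
            limit.π ((Functor.const Γ).obj V₀) c.out) ∧
        (∀ c : Pi0 Γ,
          biproduct.ι (fun _ : Pi0 Γ => V₀) c ≫ e.inv ≫
              (∑ᶠ d : Pi0 Γ, (Nat.card (d.out ⟶ d.out) : ℂ)⁻¹ •
                (limit.π ((Functor.const Γ).obj V₀) d.out : limit ((Functor.const Γ).obj V₀) ⟶ V₀)) =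
            (Nat.card (c.out ⟶ c.out) : ℂ)⁻¹ • 𝟙 V₀)) := by
  have : Finite (Pi0 Γ) := EssentiallyFiniteGroupoid.finite_pi0
  have : Fintype (Pi0 Γ) := Fintype.ofFinite _
  refine ⟨⟨⟨_, isLimitConstBiproductCone Γ V₀⟩⟩, fun {_ _} =>
    ⟨limitConstIsoBiproduct Γ V₀, limitConstIsoBiproduct_hom_π Γ V₀, fun c => ?_⟩⟩
  rw [finsum_eq_sum_of_fintype, Preadditive.comp_sum]
  simp_rw [Linear.comp_smul, limitConstIsoBiproduct_inv_π]
  exact biproduct.ι_comp_sum_smul_π_const _ c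

/-- for an essentially finite groupoid `Γ` and an object `V₀` of a 2-vector
space `V`, the limit of the constant functor `ξ_{V₀} : Γ ⥤ V` exists; it is canonically
isomorphic to the biproduct (= product = coproduct) `⨁_{π₀(Γ)} V₀`, compatibly with the
limit projections; and the pushforward `t_*` along `t : Γ ⥤ ⋆` — the
groupoid-cardinality-weighted sum `Σ_{[x]} (1/|Aut x|) · π_{[x]}` of the limit
projections — acts on the summand indexed by `[x] ∈ π₀(Γ)` as `(1/|Aut x|) · id`. -/
theorem limit_constant_functor_essentially_finite
    {V : Type u} [Category.{v} V] [Preadditive V] [CategoryTheory.Linear ℂ V]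
    [HasFiniteBiproducts V] [IsTwoVectorSpace V]
    {Γ : Type} [Groupoid Γ] [EssentiallyFiniteGroupoid Γ] (V₀ : V) :
    HasLimit ((Functor.const Γ).obj V₀) ∧
    (∀ [HasLimit ((Functor.const Γ).obj V₀)] [HasBiproduct (fun _ : Pi0 Γ => V₀)],
      ∃ e : limit ((Functor.const Γ).obj V₀) ≅ ⨁ (fun _ : Pi0 Γ => V₀),
        (∀ c : Pi0 Γ,
          e.hom ≫ biproduct.π (fun _ : Pi0 Γ => V₀) c =
            limit.π ((Functor.const Γ).obj V₀) c.out) ∧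
        (∀ c : Pi0 Γ,
          biproduct.ι (fun _ : Pi0 Γ => V₀) c ≫ e.inv ≫
              (∑ᶠ d : Pi0 Γ, (Nat.card (d.out ⟶ d.out) : ℂ)⁻¹ •
                (limit.π ((Functor.const Γ).obj V₀) d.out : limit ((Functor.const Γ).obj V₀) ⟶ V₀)) =
            (Nat.card (c.out ⟶ c.out) : ℂ)⁻¹ • 𝟙 V₀)) :=
  limit_constant_functor_essentially_finite_general V₀
end

section
/- In the bicategory of spans of essentially finite groupoids (1-morphisms Γ₀ ← Λ → Γ₁, composition by homotopy pullback, monoidal structure by Cartesian product, unit the terminal groupoid ⋆), every object Γ is dualizable in the homotopy category, with dual Γ itself, evaluation span Γ × Γ ← Γ → ⋆ and coevaluation span ⋆ ← Γ → Γ × Γ given by the diagonal, satisfying the triangle identities up to 2-isomorphism. -/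
open CategoryTheory

/-- Two spans `X ⟵ A ⟶ Y` and `X ⟵ B ⟶ Y` of categories are equivalent (2-isomorphic in
the span bicategory) if there is an equivalence of the apexes commuting with the legs up
to natural isomorphism. -/
def SpansEquivalent {X Y A B : Type*} [Category X] [Category Y] [Category A] [Category B]
    (lA : A ⥤ X) (rA : A ⥤ Y) (lB : B ⥤ X) (rB : B ⥤ Y) : Prop :=
  ∃ E : A ⥤ B, E.IsEquivalence ∧ Nonempty (E ⋙ lB ≅ lA) ∧ Nonempty (E ⋙ rB ≅ rA)

variable (Γ : Type*) [Groupoid Γ]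

/-- The right leg of the span `id_Γ ⊗ coev` (with `coev` given by the diagonal). -/
def idTensorCoev : (Γ × Γ) ⥤ (Γ × Γ × Γ) where
  obj p := (p.1, p.2, p.2)
  map f := (f.1, f.2, f.2)

/-- The left leg of the span `ev ⊗ id_Γ` (with `ev` given by the diagonal). -/
def evTensorId : (Γ × Γ) ⥤ (Γ × Γ × Γ) where
  obj p := (p.1, p.1, p.2)
  map f := (f.1, f.1, f.2)

/-- The right leg of the span `coev ⊗ id_Γ`. -/
def coevTensorId : (Γ × Γ) ⥤ ((Γ × Γ) × Γ) where
  obj p := ((p.1, p.1), p.2)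
  map f := ((f.1, f.1), f.2)

/-- The left leg of the span `id_Γ ⊗ ev`. -/
def idTensorEv : (Γ × Γ) ⥤ ((Γ × Γ) × Γ) where
  obj p := ((p.1, p.2), p.2)
  map f := ((f.1, f.2), f.2)

/-!
An object of the homotopy pullback computing `(ev ⊗ id) ∘ (id ⊗ coev)` is a zig-zag
`a ⟶ c ⟵ b ⟶ d` in `Γ`. Since `Γ` is a groupoid, every such zig-zag is isomorphic to the
constant one at `a`, and morphisms of zig-zags are determined by their first component, so the
diagonal `Γ ⥤ Comma (idTensorCoev Γ) (evTensorId Γ)` is an equivalence along which both legs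
become the identity. The other triangle composite is the mirror image of the first one.
-/

namespace SpansEquivalent

variable {X Y A B C : Type*} [Category X] [Category Y] [Category A] [Category B] [Category C]
  {lA : A ⥤ X} {rA : A ⥤ Y} {lB : B ⥤ X} {rB : B ⥤ Y} {lC : C ⥤ X} {rC : C ⥤ Y}

theorem symm (h : SpansEquivalent lA rA lB rB) : SpansEquivalent lB rB lA rA := by
  obtain ⟨E, _, ⟨el⟩, ⟨er⟩⟩ := h
  let e := E.asEquivalence
  exact ⟨e.inverse, inferInstance,
    ⟨Functor.isoWhiskerLeft _ el.symm ≪≫ (Functor.associator _ _ _).symm ≪≫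
      Functor.isoWhiskerRight e.counitIso _ ≪≫ Functor.leftUnitor _⟩,
    ⟨Functor.isoWhiskerLeft _ er.symm ≪≫ (Functor.associator _ _ _).symm ≪≫
      Functor.isoWhiskerRight e.counitIso _ ≪≫ Functor.leftUnitor _⟩⟩

theorem trans (h : SpansEquivalent lA rA lB rB) (h' : SpansEquivalent lB rB lC rC) :
    SpansEquivalent lA rA lC rC := by
  obtain ⟨E, _, ⟨el⟩, ⟨er⟩⟩ := h
  obtain ⟨E', _, ⟨el'⟩, ⟨er'⟩⟩ := h'
  exact ⟨E ⋙ E', inferInstance,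
    ⟨Functor.associator _ _ _ ≪≫ Functor.isoWhiskerLeft E el' ≪≫ el⟩,
    ⟨Functor.associator _ _ _ ≪≫ Functor.isoWhiskerLeft E er' ≪≫ er⟩⟩

end SpansEquivalent

def toZigzagApex : Γ ⥤ Comma (idTensorCoev Γ) (evTensorId Γ) where
  obj x := ⟨(x, x), (x, x), 𝟙 _⟩
  map f := ⟨(f, f), (f, f), by ext <;> simp [idTensorCoev, evTensorId]⟩

instance : (toZigzagApex Γ).Faithful where
  map_injective h := congrArg (fun u => u.left.1) h

instance : (toZigzagApex Γ).Full where
  map_surjective u := by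
    have h := u.w
    simp only [toZigzagApex, idTensorCoev, evTensorId, Category.comp_id, Category.id_comp] at h
    have h₁ : u.left.1 = u.right.1 := congrArg (·.1) h
    have h₂ : u.left.2 = u.right.1 := congrArg (·.2.1) h
    have h₃ : u.left.2 = u.right.2 := congrArg (·.2.2) h
    refine ⟨u.left.1, ?_⟩
    ext
    · rfl
    · exact h₁.trans h₂.symm
    · exact h₁
    · exact h₁.trans (h₂.symm.trans h₃)

instance : (toZigzagApex Γ).EssSurj where
  mem_essImage X := ⟨X.left.1, ⟨Comma.isoMk
    (asIso (𝟙 _, X.hom.1 ≫ Groupoid.inv X.hom.2.1))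
    (asIso (X.hom.1, X.hom.1 ≫ Groupoid.inv X.hom.2.1 ≫ X.hom.2.2))
    (by ext <;> simp [toZigzagApex, idTensorCoev, evTensorId])⟩⟩

theorem spansEquivalent_id_zigzag : SpansEquivalent (𝟭 Γ) (𝟭 Γ)
    (Comma.fst (idTensorCoev Γ) (evTensorId Γ) ⋙ CategoryTheory.Prod.fst Γ Γ)
    (Comma.snd (idTensorCoev Γ) (evTensorId Γ) ⋙ CategoryTheory.Prod.snd Γ Γ) :=
  ⟨toZigzagApex Γ, { }, ⟨Iso.refl _⟩, ⟨Iso.refl _⟩⟩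

/-- `(x, y, z) ↦ ((z, y), x)`. -/
def tripleReverse : Γ × Γ × Γ ≌ (Γ × Γ) × Γ :=
  (Prod.braiding Γ (Γ × Γ)).trans ((Prod.braiding Γ Γ).prod CategoryTheory.Equivalence.refl)

def swapCompCoevTensorIdIso :
    CategoryTheory.Prod.swap Γ Γ ⋙ coevTensorId Γ ≅ idTensorCoev Γ ⋙ (tripleReverse Γ).functor :=
  Iso.refl _

def evTensorIdCompTripleReverseIso :
    evTensorId Γ ⋙ (tripleReverse Γ).functor ≅ CategoryTheory.Prod.swap Γ Γ ⋙ idTensorEv Γ :=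
  Iso.refl _

/-- Reads the zig-zag `a ⟶ c ⟵ b ⟶ d` backwards, as `d ⟵ b ⟶ c ⟵ a`. -/
abbrev zigzagMirror :
    Comma (idTensorCoev Γ) (evTensorId Γ) ⥤ Comma (coevTensorId Γ) (idTensorEv Γ) :=
  Comma.map (swapCompCoevTensorIdIso Γ).hom (evTensorIdCompTripleReverseIso Γ).hom

theorem spansEquivalent_zigzag_mirror : SpansEquivalent
    (Comma.fst (idTensorCoev Γ) (evTensorId Γ) ⋙ CategoryTheory.Prod.fst Γ Γ)
    (Comma.snd (idTensorCoev Γ) (evTensorId Γ) ⋙ CategoryTheory.Prod.snd Γ Γ)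
    (Comma.fst (coevTensorId Γ) (idTensorEv Γ) ⋙ CategoryTheory.Prod.snd Γ Γ)
    (Comma.snd (coevTensorId Γ) (idTensorEv Γ) ⋙ CategoryTheory.Prod.fst Γ Γ) :=
  ⟨zigzagMirror Γ, { }, ⟨Iso.refl _⟩, ⟨Iso.refl _⟩⟩

theorem span_groupoid_dualizable :
    SpansEquivalent
      (Comma.fst (idTensorCoev Γ) (evTensorId Γ) ⋙ CategoryTheory.Prod.fst Γ Γ)
      (Comma.snd (idTensorCoev Γ) (evTensorId Γ) ⋙ CategoryTheory.Prod.snd Γ Γ)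
      (𝟭 Γ) (𝟭 Γ) ∧
    SpansEquivalent
      (Comma.fst (coevTensorId Γ) (idTensorEv Γ) ⋙ CategoryTheory.Prod.snd Γ Γ)
      (Comma.snd (coevTensorId Γ) (idTensorEv Γ) ⋙ CategoryTheory.Prod.fst Γ Γ)
      (𝟭 Γ) (𝟭 Γ) :=
  have first := (spansEquivalent_id_zigzag Γ).symm
  ⟨first, (spansEquivalent_zigzag_mirror Γ).symm.trans first⟩
end
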